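/- Let Π be a sequence of primes tending to infinity and Γ a Π-graded torsion group. Then every normal subgroup of Γ is closed in the profinite topology of Γ. -/

import Mathlib

/-!
Let `x` lie in every `N ⊔ M` and let `y` be its image in `Γ ⧸ N`. Choose `n₀` such that every
prime `P n` with `n > n₀` exceeds the order of `y`. Since `x ∈ N ⊔ Γ^{Π(n₀)}`, some `s ∈ Γ^{Π(n₀)}`
maps to `y`. Raising `s` to a suitable power `e` with `y ^ e = y` strips from its order every prime
not dividing the order of `y`. Then `t = s ^ e` still maps to `y`, and its order is prime to every
later `P n`. An element of `K` of order prime to `p` is a power of its `p`-th power, so it lies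
in `D_p(K)`. Hence `t` lies in the whole series, so `t = 1` and `x ∈ N`.
-/

open scoped commutatorElement

/-- `D_p(K) = K^p [K,K]`: the subgroup generated by `p`-th powers and commutators of
elements of `K`, as a subgroup of the ambient group. -/
def Dverbal {Γ : Type*} [Group Γ] (p : ℕ) (K : Subgroup Γ) : Subgroup Γ :=
  Subgroup.closure ({x : Γ | ∃ k ∈ K, x = k ^ p} ∪
    {x : Γ | ∃ a ∈ K, ∃ b ∈ K, x = ⁅a, b⁆})

/-- The series `Γ^{Π(0)} = Γ`, `Γ^{Π(n)} = D_{p_n}(Γ^{Π(n-1)})`. -/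
def piSeries {Γ : Type*} [Group Γ] (P : ℕ → ℕ) : ℕ → Subgroup Γ
  | 0 => ⊤
  | n + 1 => Dverbal (P (n + 1)) (piSeries P n)

open Subgroup

section OrderOf

variable {G H : Type*} [Group G] [Group H]

theorem exists_pow_eq_self_and_prime_dvd_orderOf_pow {s : G} (hs : IsOfFinOrder s) (y : H) :
    ∃ e : ℕ, y ^ e = y ∧ ∀ p : ℕ, p.Prime → p ∣ orderOf (s ^ e) → p ∣ orderOf y := by
  induction hr : orderOf s using Nat.strong_induction_on generalizing s with
  | _ r ih =>
    by_cases hl : ∃ ℓ : ℕ, ℓ.Prime ∧ ℓ ∣ r ∧ ¬ ℓ ∣ orderOf y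
    · obtain ⟨ℓ, hℓ, hℓr, hℓy⟩ := hl
      obtain ⟨c, hc⟩ := exists_pow_eq_self_of_coprime ((hℓ.coprime_iff_not_dvd).2 hℓy)
      have hpos : 0 < orderOf (s ^ ℓ) := hs.pow.orderOf_pos
      have hlt : orderOf ((s ^ ℓ) ^ c) < r := by
        have hdiv : orderOf (s ^ ℓ) = r / ℓ := hr ▸ orderOf_pow_of_dvd hℓ.ne_zero (hr ▸ hℓr)
        calc orderOf ((s ^ ℓ) ^ c) ≤ orderOf (s ^ ℓ) := Nat.le_of_dvd hpos (orderOf_pow_dvd c)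
          _ < r := hdiv ▸ Nat.div_lt_self (hr ▸ hs.orderOf_pos) hℓ.one_lt
      obtain ⟨e, hye, hprime⟩ := ih _ hlt hs.pow.pow rfl
      refine ⟨ℓ * c * e, ?_, ?_⟩
      · rw [pow_mul, pow_mul, hc, hye]
      · rwa [pow_mul, pow_mul]
    · push Not at hl
      exact ⟨1, pow_one y, fun p hp hdvd => hl p hp (by simpa [hr] using hdvd)⟩

end OrderOf

section Dverbal

variable {Γ : Type*} [Group Γ]

theorem pow_mem_Dverbal {p : ℕ} {K : Subgroup Γ} {k : Γ} (hk : k ∈ K) :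
    k ^ p ∈ Dverbal p K :=
  subset_closure (Or.inl ⟨k, hk, rfl⟩)

theorem mem_Dverbal_of_coprime {p : ℕ} {K : Subgroup Γ} {s : Γ} (hs : s ∈ K)
    (hp : p.Coprime (orderOf s)) : s ∈ Dverbal p K := by
  obtain ⟨c, hc⟩ := exists_pow_eq_self_of_coprime hp
  exact hc ▸ (Dverbal p K).pow_mem (pow_mem_Dverbal hs) c

theorem Dverbal_le (p : ℕ) (K : Subgroup Γ) : Dverbal p K ≤ K := by
  rw [Dverbal, closure_le]
  rintro x (⟨k, hk, rfl⟩ | ⟨a, ha, b, hb, rfl⟩)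
  · exact K.pow_mem hk p
  · exact K.mul_mem (K.mul_mem (K.mul_mem ha hb) (K.inv_mem ha)) (K.inv_mem hb)

theorem map_Dverbal_le {Δ : Type*} [Group Δ] (f : Γ →* Δ) (p : ℕ) {K : Subgroup Γ}
    {L : Subgroup Δ} (hKL : K.map f ≤ L) : (Dverbal p K).map f ≤ Dverbal p L := by
  rw [Dverbal, MonoidHom.map_closure]
  apply Subgroup.closure_mono
  rintro _ ⟨x, (⟨k, hk, rfl⟩ | ⟨a, ha, b, hb, rfl⟩), rfl⟩
  · exact Or.inl ⟨f k, hKL ⟨k, hk, rfl⟩, map_pow f k p⟩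
  · exact Or.inr ⟨f a, hKL ⟨a, ha, rfl⟩, f b, hKL ⟨b, hb, rfl⟩, map_commutatorElement f a b⟩

theorem Dverbal_characteristic (p : ℕ) {K : Subgroup Γ} (hK : K.Characteristic) :
    (Dverbal p K).Characteristic :=
  characteristic_iff_map_le.2 fun φ =>
    map_Dverbal_le φ.toMonoidHom p (characteristic_iff_map_le.1 hK φ)

end Dverbal

section piSeries

variable {Γ : Type*} [Group Γ] (P : ℕ → ℕ)

instance piSeries_characteristic : ∀ n, (piSeries (Γ := Γ) P n).Characteristic
  | 0 => topCharacteristic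
  | n + 1 => Dverbal_characteristic _ (piSeries_characteristic n)

theorem piSeries_antitone : Antitone (piSeries (Γ := Γ) P) :=
  antitone_nat_of_succ_le fun _ => Dverbal_le _ _

theorem mem_iInf_piSeries_of_coprime {n₀ : ℕ} {s : Γ} (hs : s ∈ piSeries P n₀)
    (hcop : ∀ n, n₀ < n → (P n).Coprime (orderOf s)) : s ∈ ⨅ n, piSeries P n := by
  have hlate : ∀ n, n₀ ≤ n → s ∈ piSeries P n := by
    intro n hn
    induction n, hn using Nat.le_induction with
    | base => exact hs
    | succ n _ ih => exact mem_Dverbal_of_coprime ih (hcop (n + 1) (by omega))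
  refine mem_iInf.2 fun n => ?_
  rcases le_total n n₀ with h | h
  · exact piSeries_antitone P h hs
  · exact hlate n h

end piSeries

/-- If `Π` is a sequence of primes tending to infinity and `Γ` is a
`Π`-graded torsion group, then every normal subgroup `N` of `Γ` is closed in the profinite
topology of `Γ`: it is the intersection of the subgroups `N·M` as `M` ranges over the
finite-index normal subgroups of `Γ`. -/
theorem statement6 {Γ : Type*} [Group Γ] (P : ℕ → ℕ)
    (hP : ∀ i, (P i).Prime)
    (hPinf : Filter.Tendsto P Filter.atTop Filter.atTop)
    (htorsion : ∀ g : Γ, IsOfFinOrder g)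
    (hfin : ∀ n, (piSeries (Γ := Γ) P n).FiniteIndex)
    (hres : ⨅ n, piSeries (Γ := Γ) P n = ⊥)
    (N : Subgroup Γ) (hN : N.Normal) :
    (⨅ (M : Subgroup Γ) (_ : M.Normal) (_ : M.FiniteIndex), N ⊔ M) = N := by
  refine le_antisymm (fun x hx => ?_) (le_iInf₂ fun M _ => le_iInf fun _ => le_sup_left)
  set y : Γ ⧸ N := QuotientGroup.mk x
  have hy : 0 < orderOf y := ((QuotientGroup.mk' N).isOfFinOrder (htorsion x)).orderOf_pos
  obtain ⟨n₀, hn₀⟩ := Filter.eventually_atTop.1 (hPinf.eventually_gt_atTop (orderOf y))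
  have hx₀ : x ∈ N ⊔ piSeries P n₀ :=
    mem_iInf.1 (mem_iInf.1 (mem_iInf.1 hx _) inferInstance) (hfin n₀)
  obtain ⟨a, ha, s, hs, rfl⟩ := mem_sup_of_normal_left.1 hx₀
  have hsy : (s : Γ ⧸ N) = y := by
    change _ = ((a * s : Γ) : Γ ⧸ N)
    rw [QuotientGroup.mk_mul, (QuotientGroup.eq_one_iff a).2 ha, one_mul]
  obtain ⟨e, hye, hprime⟩ := exists_pow_eq_self_and_prime_dvd_orderOf_pow (htorsion s) y
  have hcop : ∀ n, n₀ < n → (P n).Coprime (orderOf (s ^ e)) := fun n hn =>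
    (hP n).coprime_iff_not_dvd.2 fun hdvd =>
      (Nat.le_of_dvd hy (hprime _ (hP n) hdvd)).not_gt (hn₀ n hn.le)
  have hse : s ^ e = 1 := mem_bot.1 (hres ▸ mem_iInf_piSeries_of_coprime P (pow_mem hs e) hcop)
  rw [← QuotientGroup.eq_one_iff]
  calc y = (s : Γ ⧸ N) ^ e := by rw [hsy, hye]
    _ = 1 := by rw [← QuotientGroup.mk_pow, hse, QuotientGroup.mk_one]
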